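/- arXiv:1707.07762 — 2 statements merged into one kernel-verified Lean document; each statement's English description precedes it below -/
import Mathlib

section
/- For t > 0 and parameters α, β > 0 and complex ξ, η with positive real parts, the convolution integral ∫₀ᵗ (t−y)^{α−1} e^{−ξ(t−y)} y^{β−1} e^{−ηy} dy equals t^{α+β−1} e^{−ξt} · (Γ(α)Γ(β)/Γ(α+β)) · ₁F₁(β, α+β; (ξ−η)t), where ₁F₁ is the confluent hypergeometric function. -/
/-! Writing `ξ(t - y) + ηy = ξt - (ξ - η)y`, the integral is `e^{-ξt}` times Kummer's integral
`∫₀ᵗ y^{β-1} (t-y)^{α-1} e^{cy} dy` with `c = ξ - η`. Expanding `e^{cy}` in its power series,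
which is dominated on `[0, t]` by `e^{|c| t}`, turns the `k`-th term into the Beta integral
`t^{α+β+k-1} B(β + k, α)`, and `B(β + k, α) = B(β, α) (β)ₖ / (α + β)ₖ` by `Γ(s + 1) = s Γ(s)`. -/

open MeasureTheory intervalIntegral

noncomputable def hyp1F1 (a b z : ℂ) : ℂ :=
  ∑' k : ℕ, (∏ i ∈ Finset.range k, (a + i) / (b + i)) * z ^ k / (k.factorial : ℂ)

namespace Complex

theorem ne_neg_natCast_of_re_pos {s : ℂ} (hs : 0 < s.re) (m : ℕ) : s ≠ -m := by
  rintro rfl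
  simp only [neg_re, natCast_re] at hs
  linarith [(Nat.cast_nonneg m : (0 : ℝ) ≤ m)]

theorem Gamma_add_nat_eq_mul_prod {s : ℂ} (hs : ∀ m : ℕ, s ≠ -m) (n : ℕ) :
    Gamma (s + n) = Gamma s * ∏ i ∈ Finset.range n, (s + i) := by
  induction n with
  | zero => simp
  | succ n ih =>
    have hsn : s + n ≠ 0 := fun h => hs n (eq_neg_of_add_eq_zero_left h)
    rw [Nat.cast_succ, ← add_assoc, Gamma_add_one _ hsn, ih, Finset.prod_range_succ]
    ring

theorem betaIntegral_add_nat {u v : ℂ} (hu : 0 < u.re) (hv : 0 < v.re) (k : ℕ) :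
    betaIntegral (u + k) v = betaIntegral u v * ∏ i ∈ Finset.range k, (u + i) / (u + v + i) := by
  have huv : 0 < (u + v).re := by simp only [add_re]; linarith
  have huk : 0 < (u + k).re := by simp only [add_re, natCast_re]; positivity
  have hprod : ∏ i ∈ Finset.range k, (u + v + i) ≠ 0 :=
    Finset.prod_ne_zero_iff.mpr fun i _ h =>
      ne_neg_natCast_of_re_pos huv i (eq_neg_of_add_eq_zero_left h)
  rw [betaIntegral_eq_Gamma_mul_div _ _ huk hv, betaIntegral_eq_Gamma_mul_div _ _ hu hv,
    show u + k + v = u + v + k by ring, Gamma_add_nat_eq_mul_prod (ne_neg_natCast_of_re_pos hu),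
    Gamma_add_nat_eq_mul_prod (ne_neg_natCast_of_re_pos huv), Finset.prod_div_distrib]
  field_simp

end Complex

open scoped Nat in
theorem hasSum_integral_mul_cexp {g : ℝ → ℂ} {a b : ℝ} (hg : IntervalIntegrable g volume a b)
    (c : ℂ) :
    HasSum (fun k : ℕ => c ^ k / k ! * ∫ y in a..b, g y * (y : ℂ) ^ k)
      (∫ y in a..b, g y * Complex.exp (c * y)) := by
  set R := ‖c‖ * max |a| |b|
  have hnorm : ∀ y ∈ Set.uIoc a b, ‖c * (y : ℂ)‖ ≤ R := fun y hy => by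
    rw [norm_mul, Complex.norm_real, Real.norm_eq_abs]
    refine mul_le_mul_of_nonneg_left ?_ (norm_nonneg c)
    rcases Set.mem_uIcc.mp (Set.uIoc_subset_uIcc hy) with h | h
    · exact abs_le_max_abs_abs h.1 h.2
    · exact max_comm |a| |b| ▸ abs_le_max_abs_abs h.1 h.2
  have hterm : ∀ k : ℕ, c ^ k / k ! * ∫ y in a..b, g y * (y : ℂ) ^ k =
      ∫ y in a..b, g y * ((c * y) ^ k / k !) := fun k => by
    rw [← intervalIntegral.integral_const_mul]
    congr 1 with y
    ring
  simp_rw [hterm]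
  have hexp (y : ℝ) : HasSum (fun k : ℕ => g y * ((c * y) ^ k / k !)) (g y * Complex.exp (c * y)) :=
    (Complex.exp_eq_exp_ℂ ▸ NormedSpace.expSeries_div_hasSum_exp (c * y)).mul_left (g y)
  refine intervalIntegral.hasSum_integral_of_dominated_convergence
    (fun k y => ‖g y‖ * (R ^ k / k !)) (fun k => ?_) (fun k => ae_of_all _ fun y hy => ?_)
    (ae_of_all _ fun y _ => (Real.summable_pow_div_factorial R).mul_left _) ?_
    (ae_of_all _ fun y _ => hexp y)
  · exact hg.def'.aestronglyMeasurable.mul (by fun_prop)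
  · rw [norm_mul, norm_div, norm_pow, RCLike.norm_natCast]
    gcongr
    exact hnorm y hy
  · simp_rw [tsum_mul_left]
    exact hg.norm.mul_const _

namespace Complex

variable {a b : ℂ} {t : ℝ}

theorem intervalIntegrable_cpow_mul_sub_cpow (ha : 0 < a.re) (hb : 0 < b.re) (ht : 0 < t) :
    IntervalIntegrable (fun y : ℝ => (y : ℂ) ^ (b - 1) * ((t : ℂ) - y) ^ (a - 1)) volume 0 t := by
  -- a non-integrable function has integral `0`, while this one is `t^(a+b-1) Γ(a) Γ(b) / Γ(a+b)`
  refine intervalIntegrable_of_integral_ne_zero ?_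
  have hab : 0 < (b + a).re := by simp only [add_re]; linarith
  rw [betaIntegral_scaled _ _ ht, betaIntegral_eq_Gamma_mul_div _ _ hb ha]
  exact mul_ne_zero (cpow_ne_zero_iff.mpr (.inl (by exact_mod_cast ht.ne')))
    (div_ne_zero (mul_ne_zero (Gamma_ne_zero_of_re_pos hb) (Gamma_ne_zero_of_re_pos ha))
      (Gamma_ne_zero_of_re_pos hab))

theorem integral_cpow_mul_sub_cpow_mul_pow (ha : 0 < a.re) (hb : 0 < b.re) (ht : 0 < t) (k : ℕ) :
    ∫ y in (0 : ℝ)..t, (y : ℂ) ^ (b - 1) * ((t : ℂ) - y) ^ (a - 1) * (y : ℂ) ^ k =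
      t ^ (a + b - 1) * betaIntegral b a * (∏ i ∈ Finset.range k, (b + i) / (b + a + i)) *
        t ^ k := by
  have hpow : ∀ y ∈ Set.uIoc 0 t,
      (y : ℂ) ^ (b - 1) * ((t : ℂ) - y) ^ (a - 1) * (y : ℂ) ^ k =
        (y : ℂ) ^ (b + k - 1) * ((t : ℂ) - y) ^ (a - 1) := by
    intro y hy
    have hy0 : (y : ℂ) ≠ 0 := by
      rw [Set.uIoc_of_le ht.le] at hy; exact_mod_cast hy.1.ne'
    rw [show b + k - 1 = b - 1 + k by ring, cpow_add _ _ hy0, cpow_natCast]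
    ring
  have htk : (t : ℂ) ^ (b + k + a - 1) = t ^ (a + b - 1) * t ^ k := by
    rw [show b + k + a - 1 = a + b - 1 + k by ring, cpow_add _ _ (by exact_mod_cast ht.ne'),
      cpow_natCast]
  rw [integral_congr_ae (ae_of_all _ hpow), betaIntegral_scaled _ _ ht, htk,
    betaIntegral_add_nat hb ha]
  ring

theorem integral_cpow_mul_sub_cpow_mul_cexp (ha : 0 < a.re) (hb : 0 < b.re) (ht : 0 < t) (c : ℂ) :
    ∫ y in (0 : ℝ)..t, (y : ℂ) ^ (b - 1) * ((t : ℂ) - y) ^ (a - 1) * exp (c * y) =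
      t ^ (a + b - 1) * (Gamma a * Gamma b / Gamma (a + b)) * hyp1F1 b (a + b) (c * t) := by
  rw [← (hasSum_integral_mul_cexp (intervalIntegrable_cpow_mul_sub_cpow ha hb ht) c).tsum_eq,
    hyp1F1, ← tsum_mul_left]
  refine tsum_congr fun k => ?_
  rw [integral_cpow_mul_sub_cpow_mul_pow ha hb ht k, betaIntegral_eq_Gamma_mul_div _ _ hb ha,
    add_comm b a, mul_pow]
  ring

end Complex

theorem convolution_integral_eq_hyp1F1_general
    (α β : ℝ) (hα : 0 < α) (hβ : 0 < β) (ξ η : ℂ)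
    (t : ℝ) (ht : 0 < t) :
    (∫ y in (0 : ℝ)..t,
        (((t - y) ^ (α - 1) : ℝ) : ℂ) * Complex.exp (-ξ * (t - y)) *
          ((y ^ (β - 1) : ℝ) : ℂ) * Complex.exp (-η * y))
      = ((t ^ (α + β - 1) : ℝ) : ℂ) * Complex.exp (-ξ * t) *
          (Complex.Gamma α * Complex.Gamma β / Complex.Gamma (α + β)) *
          hyp1F1 β (α + β) ((ξ - η) * t) := by
  have hintegrand : ∀ y ∈ Set.uIcc 0 t,
      (((t - y) ^ (α - 1) : ℝ) : ℂ) * Complex.exp (-ξ * (t - y)) *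
          ((y ^ (β - 1) : ℝ) : ℂ) * Complex.exp (-η * y) =
        Complex.exp (-ξ * t) * ((y : ℂ) ^ ((β : ℂ) - 1) * ((t : ℂ) - y) ^ ((α : ℂ) - 1) *
          Complex.exp ((ξ - η) * y)) := by
    intro y hy
    rw [Set.uIcc_of_le ht.le] at hy
    have hexp : Complex.exp (-ξ * (t - y)) * Complex.exp (-η * y) =
        Complex.exp (-ξ * t) * Complex.exp ((ξ - η) * y) := by
      rw [← Complex.exp_add, ← Complex.exp_add]
      ring_nf
    rw [Complex.ofReal_cpow (sub_nonneg.mpr hy.2), Complex.ofReal_cpow hy.1]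
    push_cast
    linear_combination ((t : ℂ) - y) ^ ((α : ℂ) - 1) * (y : ℂ) ^ ((β : ℂ) - 1) * hexp
  rw [integral_congr hintegrand, intervalIntegral.integral_const_mul,
    Complex.integral_cpow_mul_sub_cpow_mul_cexp (by simpa) (by simpa) ht, Complex.ofReal_cpow ht.le]
  push_cast
  ring

theorem convolution_integral_eq_hyp1F1
    (α β : ℝ) (hα : 0 < α) (hβ : 0 < β) (ξ η : ℂ) (hξ : 0 < ξ.re) (hη : 0 < η.re)
    (t : ℝ) (ht : 0 < t) :
    (∫ y in (0 : ℝ)..t,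
        (((t - y) ^ (α - 1) : ℝ) : ℂ) * Complex.exp (-ξ * (t - y)) *
          ((y ^ (β - 1) : ℝ) : ℂ) * Complex.exp (-η * y))
      = ((t ^ (α + β - 1) : ℝ) : ℂ) * Complex.exp (-ξ * t) *
          (Complex.Gamma α * Complex.Gamma β / Complex.Gamma (α + β)) *
          hyp1F1 β (α + β) ((ξ - η) * t) :=
  convolution_integral_eq_hyp1F1_general α β hα hβ ξ η t ht
end

section
/- For x > 0, y > 0, and real p, the modified Bessel function of the second kind satisfies 2^{p+1} (y/x)^p K_p(xy) = ∫_{−∞}^{∞} exp(−x² e^{τ}/4 − y² e^{−τ} + pτ) dτ. -/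
/-!
Substituting `τ = s + log (2y/x)` turns the exponent into `-xy cosh s + p s` up to the factor
`(2y/x)^p`, and folding the resulting integral over `ℝ` onto `(0, ∞)` with `s ↦ -s` replaces
`exp (p s)` by `2 cosh (p s)`, which gives `2 K_p(xy)`. Integrability comes from
`cosh s ≥ 1 + s²/2`, which dominates the integrand by a Gaussian.
-/

open MeasureTheory

/-- Modified Bessel function of the second kind (real argument `x > 0`), via
`K_ν(x) = ∫_0^∞ exp(-x cosh t) cosh (ν t) dt`. -/
noncomputable def besselKR (ν x : ℝ) : ℝ :=
  ∫ t in Set.Ioi (0 : ℝ), Real.exp (-x * Real.cosh t) * Real.cosh (ν * t)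

open Set

theorem Real.one_add_sq_div_two_le_cosh (s : ℝ) : 1 + s ^ 2 / 2 ≤ Real.cosh s := by
  have h := sum_le_hasSum (Finset.range 2) (fun i _ => by rw [pow_mul]; positivity)
    (Real.hasSum_cosh s)
  simpa [Finset.sum_range_succ] using h

theorem integrable_exp_neg_mul_sq_add_mul {b : ℝ} (hb : 0 < b) (c : ℝ) :
    Integrable fun s : ℝ => Real.exp (-b * s ^ 2 + c * s) := by
  have hsquare : ∀ s : ℝ, -b * s ^ 2 + c * s = -b * (s - c / (2 * b)) ^ 2 + c ^ 2 / (4 * b) := by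
    intro s; field_simp; ring
  simp_rw [hsquare, Real.exp_add]
  exact ((integrable_exp_neg_mul_sq hb).comp_sub_right _).mul_const _

theorem integrable_exp_neg_mul_cosh_add_mul {a : ℝ} (ha : 0 < a) (p : ℝ) :
    Integrable fun s : ℝ => Real.exp (-a * Real.cosh s + p * s) := by
  refine (integrable_exp_neg_mul_sq_add_mul (half_pos ha) p).mono (by fun_prop)
    (ae_of_all _ fun s => ?_)
  simp only [Real.norm_eq_abs, Real.abs_exp, Real.exp_le_exp]
  nlinarith [Real.one_add_sq_div_two_le_cosh s]

theorem integral_eq_integral_Ioi_add_comp_neg {E : Type*} [NormedAddCommGroup E]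
    [NormedSpace ℝ E] {f : ℝ → E} (hf : Integrable f) :
    ∫ s, f s = ∫ s in Ioi 0, (f s + f (-s)) := by
  have hneg : ∫ s in Iic 0, f s = ∫ s in Ioi 0, f (-s) := by
    rw [integral_comp_neg_Ioi, neg_zero]
  rw [← intervalIntegral.integral_Iic_add_Ioi hf.integrableOn hf.integrableOn, hneg, add_comm,
    integral_add hf.integrableOn hf.comp_neg.integrableOn]

theorem integral_exp_neg_mul_cosh_add_mul {a : ℝ} (ha : 0 < a) (p : ℝ) :
    ∫ s, Real.exp (-a * Real.cosh s + p * s) = 2 * besselKR p a := by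
  rw [integral_eq_integral_Ioi_add_comp_neg (integrable_exp_neg_mul_cosh_add_mul ha p),
    besselKR, ← integral_const_mul]
  refine setIntegral_congr_fun measurableSet_Ioi fun s _ => ?_
  simp only [Real.cosh_neg, mul_neg, Real.exp_add, Real.cosh_eq (p * s)]
  ring

theorem exp_neg_sq_mul_exp_sub_sq_mul_exp_neg_add {x y c : ℝ}
    (hc : Real.exp c = 2 * y / x) (p s : ℝ) :
    Real.exp (-x ^ 2 * Real.exp (s + c) / 4 - y ^ 2 * Real.exp (-(s + c)) + p * (s + c))
      = (2 * y / x) ^ p * Real.exp (-(x * y) * Real.cosh s + p * s) := by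
  rw [← hc, Real.rpow_def_of_pos (Real.exp_pos c), Real.log_exp, ← Real.exp_add]
  congr 1
  rw [Real.exp_add, neg_add, Real.exp_add, Real.exp_neg c, hc, Real.cosh_eq]
  field_simp
  ring

theorem besselK_integral_representation
    (p x y : ℝ) (hx : 0 < x) (hy : 0 < y) :
    2 ^ (p + 1) * (y / x) ^ p * besselKR p (x * y)
      = ∫ τ : ℝ, Real.exp (-x ^ 2 * Real.exp τ / 4 - y ^ 2 * Real.exp (-τ) + p * τ) := by
  have hc : Real.exp (Real.log (2 * y / x)) = 2 * y / x := Real.exp_log (by positivity)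
  rw [← integral_add_right_eq_self _ (Real.log (2 * y / x))]
  simp_rw [exp_neg_sq_mul_exp_sub_sq_mul_exp_neg_add hc]
  rw [integral_const_mul, integral_exp_neg_mul_cosh_add_mul (mul_pos hx hy),
    mul_div_assoc, Real.mul_rpow zero_le_two (div_pos hy hx).le,
    Real.rpow_add zero_lt_two, Real.rpow_one]
  ring
end
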